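/- arXiv:0802.1088 — 7 statements merged into one kernel-verified Lean document; each statement's English description precedes it below -/
import Mathlib

section
/- Let G be a finite group, H a normal subgroup of G, and let N̄ be a nilpotent subgroup of the quotient group G/H. Then there exists a nilpotent subgroup N of G whose image under the canonical projection G → G/H equals N̄. -/
/-!
Take `N` minimal among the subgroups of `G` mapping onto `N̄`. If a proper subgroup `M < N`
satisfied `M ⊔ (N ∩ H) = N`, then `M` would also map onto `N̄`; so `N ∩ H` lies in every maximal
subgroup of `N`, i.e. in the Frattini subgroup `Φ(N)`. A finite group whose quotient by a normal
subgroup contained in its Frattini subgroup is nilpotent is itself nilpotent (Frattini argument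
on each Sylow subgroup), and `N ⧸ (N ∩ H) ≅ N̄`.
-/

open Subgroup

namespace Group

variable {G Q : Type*} [Group G] [Group Q]

theorem le_frattini_of_forall_sup_eq_top {K : Subgroup G}
    (hK : ∀ M : Subgroup G, M ⊔ K = ⊤ → M = ⊤) : K ≤ frattini G :=
  le_iInf₂ fun M hM => not_not.mp fun hKM => hM.1 (hK M (hM.2 _ (left_lt_sup.mpr hKM)))

theorem isNilpotent_of_surjective_of_ker_le_frattini [Finite G] [IsNilpotent Q] {f : G →* Q}
    (hf : Function.Surjective f) (hker : f.ker ≤ frattini G) : IsNilpotent G := by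
  have : Finite Q := Finite.of_surjective f hf
  refine ((isNilpotent_of_finite_tfae (G := G)).out 0 3 rfl rfl).mpr
    fun p (_ : Fact p.Prime) P => ?_
  have : ((P : Subgroup G) ⊔ f.ker).Normal := by
    rw [← comap_map_eq, ← Sylow.coe_mapSurjective hf]
    infer_instance
  refine normalizer_eq_top_iff.mp (frattini_nongenerating (top_le_iff.mp ?_))
  calc ⊤ = normalizer P ⊔ (P ⊔ f.ker) := (Sylow.normalizer_sup_eq_top' P le_sup_left).symm
    _ ≤ normalizer P ⊔ frattini G := sup_le le_sup_left (sup_le_sup le_normalizer hker)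

theorem ker_subgroupOf_le_frattini_of_minimal {f : G →* Q} {N : Subgroup G}
    (hN : Minimal (fun L : Subgroup G => L.map f = N.map f) N) :
    f.ker.subgroupOf N ≤ frattini N := by
  refine le_frattini_of_forall_sup_eq_top fun M hM => ?_
  have hmap : (M.map N.subtype).map f = N.map f := by
    have := map_eq_range_iff (f := f.comp N.subtype) |>.mpr (codisjoint_iff.mpr hM)
    rwa [← map_map, MonoidHom.range_comp, range_subtype] at this
  have hMN : M.map N.subtype = N := hN.eq_of_le hmap (map_subtype_le M)
  exact top_le_iff.mp <| map_subtype_le_map_subtype.mp <| by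
    rw [← MonoidHom.range_eq_map, range_subtype, hMN]

theorem exists_isNilpotent_map_eq [Finite G] (f : G →* Q) {K : Subgroup Q} (hK : K ≤ f.range)
    [IsNilpotent K] : ∃ N : Subgroup G, IsNilpotent N ∧ N.map f = K := by
  obtain ⟨N, hN⟩ := exists_minimal_of_wellFoundedLT (fun N : Subgroup G => N.map f = K)
    ⟨K.comap f, map_comap_eq_self hK⟩
  refine ⟨N, ?_, hN.prop⟩
  obtain rfl := hN.prop
  refine isNilpotent_of_surjective_of_ker_le_frattini (f.subgroupMap_surjective N) ?_
  rw [ker_subgroupMap]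
  exact ker_subgroupOf_le_frattini_of_minimal hN

end Group

/-- Every nilpotent subgroup of a quotient of a finite group lifts to a nilpotent subgroup. -/
theorem nilpotent_subgroup_of_quotient_lifts {G : Type*} [Group G] [Finite G]
    (H : Subgroup G) [H.Normal] (Nbar : Subgroup (G ⧸ H))
    (hN : Group.IsNilpotent Nbar) :
    ∃ N : Subgroup G, Group.IsNilpotent N ∧ N.map (QuotientGroup.mk' H) = Nbar :=
  Group.exists_isNilpotent_map_eq _ (by simp)
end

section
/- Let G be a finite group, Q a Sylow 2-subgroup of G, and x an element of odd order in the normalizer N_G(Q). Suppose there exist normal subgroups G₁, …, G_k of G such that G₁ ∩ … ∩ G_k ∩ Q is contained in the center of N_G(Q), and such that for every i and every u ∈ Q the commutator x⁻¹u⁻¹xu lies in G_i. Then x centralizes Q, i.e., xu = ux for all u ∈ Q. -/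
/-! The commutator `c = x⁻¹u⁻¹xu` lies in `Q` and in every `Gs i`, hence in the centre of `N_G(Q)`,
so it commutes with `x`. Then `u⁻¹xu = xc` gives `1 = (xc)^|x| = c^|x|`; as `c` is a `2`-element
and `|x|` is odd, `c = 1`. -/

theorem Subgroup.inv_mul_inv_mul_mul_mem_of_mem_normalizer {G : Type*} [Group G] {H : Subgroup G}
    {x u : G} (hx : x ∈ normalizer (H : Set G)) (hu : u ∈ H) : x⁻¹ * u⁻¹ * x * u ∈ H := by
  have hconj : x⁻¹ * u⁻¹ * x⁻¹⁻¹ ∈ H := (mem_normalizer_iff.mp (inv_mem hx) u⁻¹).mp (inv_mem hu)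
  simpa only [inv_inv] using mul_mem hconj hu

theorem pow_orderOf_eq_one_of_commute_inv_mul_inv_mul_mul {G : Type*} [Group G] {x u : G}
    (h : Commute x (x⁻¹ * u⁻¹ * x * u)) : (x⁻¹ * u⁻¹ * x * u) ^ orderOf x = 1 := by
  have hconj : (x * (x⁻¹ * u⁻¹ * x * u)) ^ orderOf x = 1 := by
    have hx : x * (x⁻¹ * u⁻¹ * x * u) = u⁻¹ * x * u⁻¹⁻¹ := by group
    rw [hx, conj_pow, pow_orderOf_eq_one, mul_one, mul_inv_cancel]
  rwa [h.mul_pow, pow_orderOf_eq_one, one_mul] at hconj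

theorem IsPGroup.eq_one_of_pow_eq_one {p : ℕ} {G : Type*} [Group G] (hG : IsPGroup p G) {n : ℕ}
    (hn : p.Coprime n) {g : G} (hg : g ^ n = 1) : g = 1 :=
  (hG.powEquiv hn).injective (by rw [powEquiv_apply, powEquiv_apply, hg, one_pow])

theorem centralizes_sylow_two_of_centralizes_mod_normals_general {G : Type*} [Group G] [Finite G]
    (Q : Sylow 2 G) (x : G) (hx : x ∈ Subgroup.normalizer ((Q : Subgroup G) : Set G)) (hodd : Odd (orderOf x))
    (k : ℕ) (Gs : Fin k → Subgroup G)
    (hcenter : (⨅ i, Gs i) ⊓ (Q : Subgroup G) ≤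
      Subgroup.centralizer ((Subgroup.normalizer ((Q : Subgroup G) : Set G) : Subgroup G) : Set G))
    (hcomm : ∀ i, ∀ u ∈ (Q : Subgroup G), x⁻¹ * u⁻¹ * x * u ∈ Gs i) :
    ∀ u ∈ (Q : Subgroup G), x * u = u * x := by
  intro u hu
  have hcQ := Subgroup.inv_mul_inv_mul_mul_mem_of_mem_normalizer hx hu
  have hcx : Commute x (x⁻¹ * u⁻¹ * x * u) :=
    Subgroup.mem_centralizer_iff.mp (hcenter ⟨Subgroup.mem_iInf.mpr (hcomm · u hu), hcQ⟩) x hx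
  have hc : (⟨_, hcQ⟩ : (Q : Subgroup G)) = 1 :=
    Q.isPGroup'.eq_one_of_pow_eq_one (Nat.coprime_two_left.mpr hodd)
      (Subtype.ext (pow_orderOf_eq_one_of_commute_inv_mul_inv_mul_mul hcx))
  have hcomm_eq_one : x⁻¹ * u⁻¹ * x * u = 1 := congrArg Subtype.val hc
  rw [mul_assoc, mul_assoc, inv_mul_eq_one, eq_inv_mul_iff_mul_eq] at hcomm_eq_one
  exact hcomm_eq_one.symm

/-- If `x` is an element of odd order normalizing a Sylow `2`-subgroup `Q` of a finite group `G`,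
and there are normal subgroups `G₁, …, G_k` of `G` such that `G₁ ∩ … ∩ G_k ∩ Q` lies in the
center of `N_G(Q)` and `x` centralizes `Q` modulo each `G i`, then `x` centralizes `Q`. -/
theorem centralizes_sylow_two_of_centralizes_mod_normals {G : Type*} [Group G] [Finite G]
    (Q : Sylow 2 G) (x : G) (hx : x ∈ Subgroup.normalizer ((Q : Subgroup G) : Set G)) (hodd : Odd (orderOf x))
    (k : ℕ) (Gs : Fin k → Subgroup G) (hnorm : ∀ i, (Gs i).Normal)
    (hcenter : (⨅ i, Gs i) ⊓ (Q : Subgroup G) ≤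
      Subgroup.centralizer ((Subgroup.normalizer ((Q : Subgroup G) : Set G) : Subgroup G) : Set G))
    (hcomm : ∀ i, ∀ u ∈ (Q : Subgroup G), x⁻¹ * u⁻¹ * x * u ∈ Gs i) :
    ∀ u ∈ (Q : Subgroup G), x * u = u * x :=
  centralizes_sylow_two_of_centralizes_mod_normals_general Q x hx hodd k Gs hcenter hcomm
end

section
/- Let G be a finite group and H a subgroup of G such that the index of H in G is a power of 2 and every element of odd order of G lies in H. If for every Sylow 2-subgroup Q₀ of H one has N_H(Q₀) = Q₀·C_H(Q₀), then for every Sylow 2-subgroup Q of G one has N_G(Q) = Q·C_G(Q). -/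
/-!
An element of `N_G(Q)` is the product of a `2`-element, which lies in `Q`, and an element `v` of
odd order, so it suffices that every such `v` centralizes `Q`. Since `|G : H|` is a power of `2`,
`Q ∩ H` is a Sylow `2`-subgroup of `H`; as `v ∈ H` normalizes it, (ESyl2) for `H` makes `v`
centralize `Q ∩ H`. For `x ∈ Q` the commutator `⁅v, x⁆ = v · x v⁻¹ x⁻¹` is a product of two
elements of odd order, hence lies in `Q ∩ H` and commutes with `v`. Then
`⁅v, x⁆ ^ orderOf v = 1`, and an element of odd order in the `2`-group `Q` is trivial.
-/

open Subgroup
open scoped commutatorElement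

section

variable {G : Type*} [Group G]

theorem IsOfFinOrder.exists_pow_prime_pow_eq_one_mul_coprime {g : G} (hg : IsOfFinOrder g)
    (p : ℕ) [hp : Fact p.Prime] :
    ∃ u ∈ zpowers g, ∃ v ∈ zpowers g, u * v = g ∧ (∃ k : ℕ, u ^ p ^ k = 1) ∧
      p.Coprime (orderOf v) := by
  set n := orderOf g
  set a := n.factorization p
  set b := n / p ^ a
  have hab : (p ^ a : ℤ) * b = n := mod_cast Nat.ordProj_mul_ordCompl_eq_self n p
  have hpb : p.Coprime b := Nat.coprime_ordCompl hp.out hg.orderOf_pos.ne'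
  obtain ⟨s, t, hst⟩ := Nat.isCoprime_iff_coprime.mpr (hpb.pow_left a)
  have hgn : g ^ (n : ℤ) = 1 := by rw [zpow_natCast, pow_orderOf_eq_one]
  refine ⟨g ^ (t * b), ⟨_, rfl⟩, g ^ (s * p ^ a), ⟨_, rfl⟩, ?_, ⟨a, ?_⟩, ?_⟩
  · rw [← zpow_add, add_comm, ← Nat.cast_pow, hst, zpow_one]
  · rw [← zpow_natCast, ← zpow_mul, Nat.cast_pow, mul_assoc, mul_comm (b : ℤ), hab, mul_comm,
      zpow_mul, hgn, one_zpow]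
  · refine Nat.Coprime.coprime_dvd_right (orderOf_dvd_of_pow_eq_one ?_) hpb
    rw [← zpow_natCast, ← zpow_mul, mul_assoc, hab, mul_comm, zpow_mul, hgn, one_zpow]

theorem commutatorElement_pow_orderOf_eq_one {v x : G} (h : Commute v ⁅v, x⁆) :
    ⁅v, x⁆ ^ orderOf v = 1 := by
  have hconj : ∀ k : ℕ, v ^ k * x * (v ^ k)⁻¹ = ⁅v, x⁆ ^ k * x := by
    intro k
    induction k with
    | zero => simp
    | succ k ih =>
      calc v ^ (k + 1) * x * (v ^ (k + 1))⁻¹ = v * (v ^ k * x * (v ^ k)⁻¹) * v⁻¹ := by group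
        _ = ⁅v, x⁆ ^ k * (v * x * v⁻¹) := by
          rw [ih, ← mul_assoc, (h.pow_right k).eq]; group
        _ = ⁅v, x⁆ ^ (k + 1) * x := by
          rw [pow_succ, mul_assoc (⁅v, x⁆ ^ k)]; congr 1; rw [commutatorElement_def]; group
  simpa [pow_orderOf_eq_one] using (hconj (orderOf v)).symm

theorem commutatorElement_mem_of_mem_normalizer {S : Subgroup G} {v x : G}
    (hv : v ∈ normalizer (S : Set G)) (hx : x ∈ S) : ⁅v, x⁆ ∈ S :=
  mul_mem ((mem_normalizer_iff.mp hv x).mp hx) (inv_mem hx)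

theorem IsPGroup.eq_one_of_coprime_orderOf {p : ℕ} {S : Subgroup G} (hS : IsPGroup p S) {g : G}
    (hgS : g ∈ S) (hg : p.Coprime (orderOf g)) : g = 1 := by
  have := hS.orderOf_coprime hg ⟨g, hgS⟩
  rwa [Subgroup.orderOf_mk, Nat.coprime_self, orderOf_eq_one_iff] at this

theorem IsPGroup.mem_centralizer_of_mem_sup {p : ℕ} {S : Subgroup G} (hS : IsPGroup p S) {g : G}
    (hgS : g ∈ S ⊔ centralizer (S : Set G)) (hg : p.Coprime (orderOf g)) :
    g ∈ centralizer (S : Set G) := by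
  obtain ⟨s, hs, c, hc, rfl⟩ : ∃ s ∈ S, ∃ c ∈ centralizer (S : Set G), s * c = g := by
    rw [← SetLike.mem_coe, coe_mul_of_left_le_normalizer_right] at hgS
    · exact hgS
    exact (le_centralizer_iff.mp le_rfl).trans (centralizer_le_normalizer _)
  have hsc : Commute s c := mem_centralizer_iff.mp hc s hs
  set n := orderOf (s * c)
  have hsn : s ^ n = (c ^ n)⁻¹ :=
    eq_inv_of_mul_eq_one_left (by rw [← hsc.mul_pow, pow_orderOf_eq_one])
  -- `orderOf s` is a power of `p`, and `n` is prime to `p`.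
  obtain ⟨m, hm⟩ : ∃ m : ℕ, (s ^ n) ^ m = s := by
    refine exists_pow_eq_self_of_coprime ?_
    simpa [Subgroup.orderOf_mk, Nat.coprime_comm] using hS.orderOf_coprime hg ⟨s, hs⟩
  rw [← hm, hsn]
  exact mul_mem (pow_mem (inv_mem (pow_mem hc n)) m) hc

theorem IsPGroup.mem_centralizer_of_forall_commute_commutatorElement {p : ℕ} {Q : Subgroup G}
    (hQ : IsPGroup p Q) {v : G} (hv : v ∈ normalizer (Q : Set G)) (hvp : p.Coprime (orderOf v))
    (h : ∀ x ∈ Q, Commute v ⁅v, x⁆) : v ∈ centralizer (Q : Set G) := by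
  refine mem_centralizer_iff.mpr fun x hx => ?_
  have hcQ : ⁅v, x⁆ ∈ Q := commutatorElement_mem_of_mem_normalizer hv hx
  have hcp : p.Coprime (orderOf ⁅v, x⁆) := hvp.coprime_dvd_right
    (orderOf_dvd_of_pow_eq_one (commutatorElement_pow_orderOf_eq_one (h x hx)))
  exact (commutatorElement_eq_one_iff_mul_comm.mp (hQ.eq_one_of_coprime_orderOf hcQ hcp)).symm

theorem Sylow.mem_of_mem_normalizer_of_pow_eq_one {p : ℕ} (P : Sylow p G) {g : G}
    (hg : g ∈ normalizer (P : Set G)) {k : ℕ} (hk : g ^ p ^ k = 1) : g ∈ P := by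
  have hpg : IsPGroup p (zpowers g) :=
    .of_card_dvd_pow (n := k) (Nat.card_zpowers g ▸ orderOf_dvd_of_pow_eq_one hk)
  exact ((hpg.inf_normalizer_sylow P).le ⟨mem_zpowers g, hg⟩).2

theorem Sylow.normalizer_eq_sup_centralizer_of_forall_coprime [Finite G] {p : ℕ} [Fact p.Prime]
    (P : Sylow p G)
    (h : ∀ g ∈ normalizer (P : Set G), p.Coprime (orderOf g) → g ∈ centralizer (P : Set G)) :
    normalizer (P : Set G) = (P : Subgroup G) ⊔ centralizer (P : Set G) := by
  refine le_antisymm (fun g hg => ?_) (sup_le le_normalizer (centralizer_le_normalizer _))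
  obtain ⟨u, hu, v, hv, rfl, ⟨k, hk⟩, hvp⟩ :=
    (isOfFinOrder_of_finite g).exists_pow_prime_pow_eq_one_mul_coprime p
  exact mul_mem (mem_sup_left (P.mem_of_mem_normalizer_of_pow_eq_one (zpowers_le.mpr hg hu) hk))
    (mem_sup_right (h v (zpowers_le.mpr hg hv) hvp))

theorem Sylow.not_dvd_relIndex_of_index_eq_pow [Finite G] {p : ℕ} [hp : Fact p.Prime]
    (P : Sylow p G) {H : Subgroup G} {m : ℕ} (hH : H.index = p ^ m) :
    ¬ p ∣ (P : Subgroup G).relIndex H := by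
  -- both sides are `(P ⊓ H).index`
  have hindex : (P : Subgroup G).relIndex H * p ^ m = H.relIndex P * (P : Subgroup G).index := by
    rw [← hH, ← inf_relIndex_right, relIndex_mul_index inf_le_right, ← inf_relIndex_right H,
      relIndex_mul_index inf_le_right, inf_comm]
  obtain ⟨n, hn⟩ := IsPGroup.iff_card.mp P.isPGroup'
  obtain ⟨j, -, hj⟩ := (Nat.dvd_prime_pow hp.out).mp (hn ▸ relIndex_dvd_card H P)
  have hjm : j ≤ m := by
    rw [← Nat.pow_le_pow_iff_right hp.out.one_lt, ← hj, ← hH, ← relIndex_top_right]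
    exact relIndex_le_of_le_right le_top (by rw [relIndex_top_right]; exact index_ne_zero_of_finite)
  have hdvd : (P : Subgroup G).relIndex H ∣ (P : Subgroup G).index := by
    refine ⟨p ^ (m - j), Nat.eq_of_mul_eq_mul_right (pow_pos hp.out.pos j) ?_⟩
    rw [mul_assoc, ← pow_add, Nat.sub_add_cancel hjm, hindex, hj, mul_comm]
  exact fun hpH => P.not_dvd_index (hpH.trans hdvd)

end

/-- If `H` is a subgroup of `2`-power index in a finite group `G` containing all elements of odd
order, and `H` satisfies (ESyl2), then so does `G`. -/
theorem esyl2_of_two_power_index_subgroup {G : Type*} [Group G] [Finite G] (H : Subgroup G)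
    (hidx : ∃ m : ℕ, H.index = 2 ^ m)
    (hodd : ∀ x : G, Odd (orderOf x) → x ∈ H)
    (hH : ∀ Q₀ : Sylow 2 H, Subgroup.normalizer ((Q₀ : Subgroup H) : Set H) =
      (Q₀ : Subgroup H) ⊔ Subgroup.centralizer ((Q₀ : Subgroup H) : Set H))
    (Q : Sylow 2 G) :
    Subgroup.normalizer ((Q : Subgroup G) : Set G) =
      (Q : Subgroup G) ⊔ Subgroup.centralizer ((Q : Subgroup G) : Set G) := by
  obtain ⟨m, hm⟩ := hidx
  let Q₀ : Sylow 2 H := Q.isPGroup'.comap_subtype.toSylow (Q.not_dvd_relIndex_of_index_eq_pow hm)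
  refine Q.normalizer_eq_sup_centralizer_of_forall_coprime fun v hv hv2 => ?_
  have hvH : v ∈ H := hodd v (Nat.coprime_two_left.mp hv2)
  have hv₀ : (⟨v, hvH⟩ : H) ∈ centralizer (Q₀ : Set H) := by
    refine Q₀.isPGroup'.mem_centralizer_of_mem_sup ?_ (by rwa [Subgroup.orderOf_mk])
    rw [← hH Q₀]
    exact le_normalizer_comap H.subtype hv
  refine Q.isPGroup'.mem_centralizer_of_forall_commute_commutatorElement hv hv2 fun x hx => ?_
  have hcH : ⁅v, x⁆ ∈ H := by
    have hconj : orderOf (x * v⁻¹ * x⁻¹) = orderOf v := by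
      rw [← (SemiconjBy.conj_mk x v⁻¹).orderOf_eq, orderOf_inv]
    rw [commutatorElement_def, mul_assoc, mul_assoc, ← mul_assoc x]
    exact mul_mem hvH (hodd _ (hconj ▸ Nat.coprime_two_left.mp hv2))
  have hcQ : ⁅v, x⁆ ∈ Q := commutatorElement_mem_of_mem_normalizer hv hx
  exact (congrArg Subtype.val (mem_centralizer_iff.mp hv₀ ⟨_, hcH⟩ hcQ)).symm
end

section
/- Let G be a finite group, K a Carter subgroup of G, and z a nontrivial element of the center of K. Assume that any two Carter subgroups of the centralizer C_G(z) are conjugate in C_G(z). Then for every x ∈ G, if x⁻¹zx lies in the center of K then x⁻¹zx = z. In particular, z is not conjugate in G to any power zᵏ with zᵏ ≠ z. -/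
/-!
If `x⁻¹ z x` is central in `K`, then `z` centralizes both `K` and `x K x⁻¹`. These are Carter
subgroups of `G` inside `C_G(z)`, hence Carter subgroups of `C_G(z)`, so `x K x⁻¹ = c K c⁻¹` for
some `c ∈ C_G(z)`. As `K` is self-normalizing, `c⁻¹ x ∈ K`, and
`x⁻¹ z x = (c⁻¹ x)⁻¹ (c⁻¹ z c) (c⁻¹ x) = (c⁻¹ x)⁻¹ z (c⁻¹ x) = z`.
-/

/-- A Carter subgroup: a nilpotent self-normalizing subgroup. -/
def IsCarterSubgroup {G : Type*} [Group G] (H : Subgroup G) : Prop :=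
  Group.IsNilpotent H ∧ Subgroup.normalizer (H : Set G) = H

namespace Subgroup

variable {G : Type*} [Group G]

theorem inv_mul_mem_normalizer_of_map_conj_eq {K : Subgroup G} {a b : G}
    (h : K.map (MulAut.conj a).toMonoidHom = K.map (MulAut.conj b).toMonoidHom) :
    a⁻¹ * b ∈ normalizer (K : Set G) := by
  have conj_comp (u v : G) : (MulAut.conj u).toMonoidHom.comp (MulAut.conj v).toMonoidHom
      = (MulAut.conj (u * v)).toMonoidHom := by
    ext; simp [mul_assoc]
  have conj_one : (MulAut.conj (1 : G)).toMonoidHom = MonoidHom.id G := by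
    ext; simp
  have h' := congrArg (map (MulAut.conj a⁻¹).toMonoidHom) h
  rw [map_map, map_map, conj_comp, conj_comp, inv_mul_cancel, conj_one, map_id] at h'
  exact mem_normalizer_iff_map_conj_eq.2 h'.symm

theorem le_centralizer_singleton_of_mem_centralizer {K : Subgroup G} {z : G}
    (hz : z ∈ centralizer (K : Set G)) : K ≤ centralizer {z} :=
  fun g hg => mem_centralizer_singleton_iff.2 (mem_centralizer_iff.1 hz g hg)

theorem map_conj_le_centralizer_singleton {K : Subgroup G} {x z : G}
    (hz : x⁻¹ * z * x ∈ centralizer (K : Set G)) :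
    K.map (MulAut.conj x).toMonoidHom ≤ centralizer {z} := by
  rintro _ ⟨g, hg, rfl⟩
  have hgz : Commute g (x⁻¹ * z * x) := mem_centralizer_iff.1 hz g hg
  rw [mem_centralizer_singleton_iff]
  calc x * g * x⁻¹ * z = x * (g * (x⁻¹ * z * x)) * x⁻¹ := by group
    _ = x * ((x⁻¹ * z * x) * g) * x⁻¹ := by rw [hgz.eq]
    _ = z * (x * g * x⁻¹) := by group

end Subgroup

namespace IsCarterSubgroup

variable {G : Type*} [Group G] {K : Subgroup G}

theorem subgroupOf (hK : IsCarterSubgroup K) {C : Subgroup G} (hKC : K ≤ C) :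
    IsCarterSubgroup (K.subgroupOf C) :=
  ⟨@Group.nilpotent_of_mulEquiv _ _ _ _ hK.1 (Subgroup.subgroupOfEquivOfLe hKC).symm,
    by rw [← Subgroup.subgroupOf_normalizer_eq hKC, hK.2]⟩

theorem map_conj (hK : IsCarterSubgroup K) (x : G) :
    IsCarterSubgroup (K.map (MulAut.conj x).toMonoidHom) :=
  ⟨@Group.nilpotent_of_mulEquiv _ _ _ _ hK.1 ((MulAut.conj x).subgroupMap K),
    by rw [← Subgroup.map_equiv_normalizer_eq K (MulAut.conj x), hK.2]⟩

theorem exists_mem_eq_map_conj_of_le {C : Subgroup G}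
    (hconj : ∀ H₁ H₂ : Subgroup C, IsCarterSubgroup H₁ → IsCarterSubgroup H₂ →
      ∃ c : C, H₂ = H₁.map (MulAut.conj c).toMonoidHom)
    {Q : Subgroup G} (hK : IsCarterSubgroup K) (hQ : IsCarterSubgroup Q)
    (hKC : K ≤ C) (hQC : Q ≤ C) :
    ∃ c ∈ C, Q = K.map (MulAut.conj c).toMonoidHom := by
  obtain ⟨c, hc⟩ := hconj _ _ (hK.subgroupOf hKC) (hQ.subgroupOf hQC)
  refine ⟨c, c.2, ?_⟩
  have hcomp : C.subtype.comp (MulAut.conj c).toMonoidHom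
      = (MulAut.conj (c : G)).toMonoidHom.comp C.subtype := by
    ext; simp
  rw [← Subgroup.map_subgroupOf_eq_of_le hQC, hc, Subgroup.map_map, hcomp, ← Subgroup.map_map,
    Subgroup.map_subgroupOf_eq_of_le hKC]

end IsCarterSubgroup

theorem central_element_of_carter_not_conjugate_general {G : Type*} [Group G]
    (K : Subgroup G) (hK : IsCarterSubgroup K) (z : G)
    (hzK : z ∈ K ⊓ Subgroup.centralizer (K : Set G))
    (hconj : ∀ H₁ H₂ : Subgroup (Subgroup.centralizer ({z} : Set G)),
      IsCarterSubgroup H₁ → IsCarterSubgroup H₂ →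
        ∃ c : Subgroup.centralizer ({z} : Set G),
          H₂ = H₁.map (MulAut.conj c).toMonoidHom) :
    (∀ x : G, x⁻¹ * z * x ∈ K ⊓ Subgroup.centralizer (K : Set G) → x⁻¹ * z * x = z) ∧
    (∀ (x : G) (k : ℤ), x⁻¹ * z * x = z ^ k → z ^ k = z) := by
  have conj_fixed (x : G) (hx : x⁻¹ * z * x ∈ K ⊓ Subgroup.centralizer (K : Set G)) :
      x⁻¹ * z * x = z := by
    obtain ⟨c, hcC, hc⟩ := hK.exists_mem_eq_map_conj_of_le hconj (hK.map_conj x)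
      (Subgroup.le_centralizer_singleton_of_mem_centralizer hzK.2)
      (Subgroup.map_conj_le_centralizer_singleton hx.2)
    have hd : c⁻¹ * x ∈ K := hK.2 ▸ Subgroup.inv_mul_mem_normalizer_of_map_conj_eq hc.symm
    have hdz : Commute (c⁻¹ * x) z := Subgroup.mem_centralizer_iff.1 hzK.2 _ hd
    have hcz : Commute c z := Subgroup.mem_centralizer_singleton_iff.1 hcC
    calc x⁻¹ * z * x = (c⁻¹ * x)⁻¹ * (c⁻¹ * z * c) * (c⁻¹ * x) := by group
      _ = z := by rw [hcz.inv_mul_cancel, hdz.inv_mul_cancel]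
  refine ⟨conj_fixed, fun x k hx => hx ▸ conj_fixed x ?_⟩
  rw [hx]
  exact ⟨K.zpow_mem hzK.1 k, Subgroup.zpow_mem _ hzK.2 k⟩

/-- Let `K` be a Carter subgroup of a finite group `G` and `z ≠ 1` a central element of `K`.
If Carter subgroups of `C_G(z)` are conjugate, then no `G`-conjugate of `z` other than `z`
itself lies in the center of `K`; in particular `z` is not conjugate to any power `z^k ≠ z`. -/
theorem central_element_of_carter_not_conjugate {G : Type*} [Group G] [Finite G]
    (K : Subgroup G) (hK : IsCarterSubgroup K) (z : G) (hz1 : z ≠ 1)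
    (hzK : z ∈ K ⊓ Subgroup.centralizer (K : Set G))
    (hconj : ∀ H₁ H₂ : Subgroup (Subgroup.centralizer ({z} : Set G)),
      IsCarterSubgroup H₁ → IsCarterSubgroup H₂ →
        ∃ c : Subgroup.centralizer ({z} : Set G),
          H₂ = H₁.map (MulAut.conj c).toMonoidHom) :
    (∀ x : G, x⁻¹ * z * x ∈ K ⊓ Subgroup.centralizer (K : Set G) → x⁻¹ * z * x = z) ∧
    (∀ (x : G) (k : ℤ), x⁻¹ * z * x = z ^ k → z ^ k = z) :=
  central_element_of_carter_not_conjugate_general K hK z hzK hconj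
end

section
/- Let n ≥ 5 and let σ be a nontrivial element of odd order of the alternating group Alt_n. Then there exists an integer k such that σᵏ ≠ σ and σᵏ is conjugate to σ in Alt_n. -/
/-!
Let `m` be the odd order of `σ`. In the symmetric group `σ` is conjugate to `σ ^ 2` (same cycle
type, as `2` is prime to `m`) and to `σ⁻¹`, say by `ρ` and `τ`; then `τ * ρ` conjugates `σ` to
`σ ^ (-2)`. One of `ρ`, `τ`, `τ * ρ` is even, so some `σ ^ k` with `k ∈ {2, -1, -2}` is conjugate
to `σ` in the alternating group, and `σ ^ k ≠ σ` since `m ∤ k - 1` once `m ≥ 5`.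
If `m = 3`, `σ` is a product of 3-cycles, and `n ≥ 5` leaves either two fixed points or two
3-cycles; either way the centralizer of `σ` contains an odd permutation, so every conjugate of `σ`
in the symmetric group is already one in the alternating group.
-/

open Equiv Equiv.Perm

namespace Equiv.Perm

variable {α : Type*} [Fintype α] [DecidableEq α]

theorem cycleType_pow_of_coprime {f : Perm α} {k : ℕ} (h : k.Coprime (orderOf f)) :
    (f ^ k).cycleType = f.cycleType := by
  induction f using cycle_induction_on with
  | base_one => simp
  | base_cycles c hc => rw [(hc.pow_iff.mpr h).cycleType, hc.cycleType, support_pow_coprime h]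
  | induction_disjoint f g hfg _ ihf ihg =>
    rw [hfg.orderOf] at h
    rw [hfg.commute.mul_pow, (hfg.pow_disjoint_pow k k).cycleType_mul, hfg.cycleType_mul,
      ihf (h.coprime_dvd_right (Nat.dvd_lcm_left _ _)),
      ihg (h.coprime_dvd_right (Nat.dvd_lcm_right _ _))]

theorem isConj_pow_of_coprime {f : Perm α} {k : ℕ} (h : k.Coprime (orderOf f)) :
    IsConj f (f ^ k) :=
  isConj_of_cycleType_eq (cycleType_pow_of_coprime h).symm

theorem centralizer_not_le_alternatingGroup_of_orderOf_eq_three (hα : 5 ≤ Fintype.card α)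
    {f : Perm α} (hf : orderOf f = 3) :
    ¬ Subgroup.centralizer {f} ≤ alternatingGroup α := by
  intro hle
  obtain ⟨j, hj⟩ := cycleType_prime_order (hf ▸ Nat.prime_three)
  have hcount := count_le_one_of_centralizer_le_alternating hle (orderOf f)
  have hcard := card_le_of_centralizer_le_alternating hle
  rw [hj, Multiset.count_replicate_self] at hcount
  rw [hj, Multiset.sum_replicate, hf] at hcard
  simp only [smul_eq_mul] at hcard
  omega

end Equiv.Perm

theorem conj_eq_zpow_mul_of_conj_eq_zpow {G : Type*} [Group G] {f g h : G} {a b : ℤ}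
    (hg : g * f * g⁻¹ = f ^ a) (hh : h * f * h⁻¹ = f ^ b) :
    h * g * f * (h * g)⁻¹ = f ^ (a * b) := by
  calc h * g * f * (h * g)⁻¹ = h * (g * f * g⁻¹) * h⁻¹ := by group
    _ = (h * f * h⁻¹) ^ a := by rw [hg, conj_zpow]
    _ = f ^ (a * b) := by rw [hh, ← zpow_mul, mul_comm]

theorem zpow_eq_self_iff_dvd {G : Type*} [Group G] {x : G} {k : ℤ} :
    x ^ k = x ↔ (orderOf x : ℤ) ∣ k - 1 := by
  rw [orderOf_dvd_iff_zpow_eq_one, zpow_sub_one, mul_inv_eq_one]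

namespace alternatingGroup

variable {α : Type*} [Fintype α] [DecidableEq α]

theorem isConj_of_centralizer_not_le {σ τ : alternatingGroup α}
    (hc : ¬ Subgroup.centralizer {(σ : Perm α)} ≤ alternatingGroup α)
    (h : IsConj (σ : Perm α) τ) : IsConj σ τ := by
  obtain ⟨c, hc_comm, hc_odd⟩ := SetLike.not_le_iff_exists.mp hc
  rw [Subgroup.mem_centralizer_singleton_iff] at hc_comm
  rw [mem_alternatingGroup, ← Ne, Int.units_ne_iff_eq_neg] at hc_odd
  obtain ⟨π, hπ⟩ := isConj_iff.mp h
  rw [isConj_iff]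
  rcases Int.units_eq_one_or (sign π) with hπ_even | hπ_odd
  · exact ⟨⟨π, hπ_even⟩, Subtype.ext hπ⟩
  · refine ⟨⟨π * c, by rw [mem_alternatingGroup, map_mul, hπ_odd, hc_odd]; rfl⟩, Subtype.ext ?_⟩
    simp only [Subgroup.coe_mul, Subgroup.coe_inv, ← hπ, mul_inv_rev]
    rw [show π * c * σ * (c⁻¹ * π⁻¹) = π * (c * σ * c⁻¹) * π⁻¹ by group, hc_comm]
    group

theorem exists_isConj_zpow_of_isConj {σ : alternatingGroup α} {a b : ℤ}
    (ha : IsConj (σ : Perm α) ((σ : Perm α) ^ a)) (hb : IsConj (σ : Perm α) ((σ : Perm α) ^ b)) :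
    ∃ k ∈ ({a, b, a * b} : Set ℤ), IsConj σ (σ ^ k) := by
  obtain ⟨ρ, hρ⟩ := isConj_iff.mp ha
  obtain ⟨τ, hτ⟩ := isConj_iff.mp hb
  have hconj {k : ℤ} {g : Perm α} (hg : g ∈ alternatingGroup α)
      (h : g * σ * g⁻¹ = (σ : Perm α) ^ k) : IsConj σ (σ ^ k) :=
    isConj_iff.mpr ⟨⟨g, hg⟩, Subtype.ext (by simpa using h)⟩
  rcases Int.units_eq_one_or (sign ρ) with hρ_even | hρ_odd
  · exact ⟨a, by simp, hconj hρ_even hρ⟩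
  rcases Int.units_eq_one_or (sign τ) with hτ_even | hτ_odd
  · exact ⟨b, by simp, hconj hτ_even hτ⟩
  refine ⟨a * b, by simp, hconj ?_ (conj_eq_zpow_mul_of_conj_eq_zpow hρ hτ)⟩
  rw [mem_alternatingGroup, map_mul, hρ_odd, hτ_odd]
  rfl

end alternatingGroup

open alternatingGroup in
/-- Every nontrivial element of odd order of the alternating group `Alt n`, `n ≥ 5`, is
conjugate to some power `σ^k ≠ σ`. -/
theorem alternating_odd_order_conjugate_power (n : ℕ) (hn : 5 ≤ n)
    (σ : alternatingGroup (Fin n)) (hσ : σ ≠ 1) (hodd : Odd (orderOf σ)) :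
    ∃ (k : ℤ) (g : alternatingGroup (Fin n)), σ ^ k ≠ σ ∧ g⁻¹ * σ * g = σ ^ k := by
  set m := orderOf σ
  suffices ∃ k : ℤ, ¬ (m : ℤ) ∣ k - 1 ∧ IsConj σ (σ ^ k) by
    obtain ⟨k, hk, hconj⟩ := this
    obtain ⟨c, hc⟩ := isConj_iff.mp hconj
    exact ⟨k, c⁻¹, mt zpow_eq_self_iff_dvd.mp hk, by rwa [inv_inv]⟩
  have hm1 : m ≠ 1 := by rwa [Ne, orderOf_eq_one_iff]
  have hsq : IsConj (σ : Perm (Fin n)) ((σ : Perm (Fin n)) ^ (2 : ℤ)) := by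
    exact_mod_cast isConj_pow_of_coprime (by rwa [Subgroup.orderOf_coe, Nat.coprime_two_left])
  have hinv : IsConj (σ : Perm (Fin n)) ((σ : Perm (Fin n)) ^ (-1 : ℤ)) :=
    isConj_of_cycleType_eq (by rw [zpow_neg_one, cycleType_inv])
  by_cases h3 : m = 3
  · refine ⟨2, by simp [h3], isConj_of_centralizer_not_le ?_ (by exact_mod_cast hsq)⟩
    exact centralizer_not_le_alternatingGroup_of_orderOf_eq_three (by simpa)
      (by rwa [Subgroup.orderOf_coe])
  · obtain ⟨k, hk, hconj⟩ := exists_isConj_zpow_of_isConj hsq hinv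
    refine ⟨k, ?_, hconj⟩
    have hm5 : 5 ≤ m := by obtain ⟨j, hj⟩ := hodd; omega
    rw [Int.ofNat_dvd_left]
    rcases hk with rfl | rfl | rfl <;> intro hdvd <;>
      have := Nat.le_of_dvd (by norm_num) hdvd <;> norm_num at this <;> omega
end

section
/- The alternating group Alt_5 contains no Carter subgroup: there is no subgroup H of Alt_5 that is both nilpotent and equal to its own normalizer in Alt_5. -/
open Subgroup

section

variable {G : Type*} [Group G]

theorem Group.IsNilpotent.exists_orderOf_eq_mul [Finite G] [Group.IsNilpotent G] {r s : ℕ}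
    [Fact r.Prime] [Fact s.Prime] (hrs : r ≠ s) (hr : r ∣ Nat.card G) (hs : s ∣ Nat.card G) :
    ∃ g : G, orderOf g = r * s := by
  obtain ⟨a, ha⟩ := exists_prime_orderOf_dvd_card' r hr
  obtain ⟨b, hb⟩ := exists_prime_orderOf_dvd_card' s hs
  obtain ⟨R, haR⟩ := (IsPGroup.of_card ((Nat.card_zpowers a).trans
    (ha.trans (pow_one r).symm))).exists_le_sylow
  obtain ⟨S, hbS⟩ := (IsPGroup.of_card ((Nat.card_zpowers b).trans
    (hb.trans (pow_one s).symm))).exists_le_sylow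
  have hnc := Group.normalizerCondition_of_isNilpotent (G := G)
  have hab : Commute a b := commute_of_normal_of_disjoint _ _
    (Sylow.normal_of_normalizerCondition hnc R) (Sylow.normal_of_normalizerCondition hnc S)
    (IsPGroup.disjoint_of_ne r s hrs _ _ R.isPGroup' S.isPGroup') a b
    (haR (mem_zpowers a)) (hbS (mem_zpowers b))
  refine ⟨a * b, ?_⟩
  rw [hab.orderOf_mul_eq_mul_orderOf_of_coprime
    (by rwa [ha, hb, Nat.coprime_primes Fact.out Fact.out]), ha, hb]

theorem Group.IsNilpotent.isPGroup_minFac [Finite G] [Group.IsNilpotent G]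
    (h : ∀ g : G, orderOf g = 1 ∨ (orderOf g).Prime) : IsPGroup (Nat.card G).minFac G := by
  by_cases h1 : Nat.card G = 1
  · exact IsPGroup.of_card (n := 0) h1
  have hp := Fact.mk (Nat.minFac_prime h1)
  refine IsPGroup.of_card (Nat.eq_prime_pow_of_unique_prime_dvd Nat.card_pos.ne' fun hq hdvd ↦ ?_)
  by_contra hne
  have := Fact.mk hq
  obtain ⟨g, hg⟩ := exists_orderOf_eq_mul hne hdvd (Nat.minFac_dvd _)
  rcases h g with h | h <;> rw [hg] at h
  · exact hq.ne_one (Nat.eq_one_of_mul_eq_one_right h)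
  · exact Nat.not_prime_mul hq.ne_one hp.out.ne_one h

theorem Subgroup.eq_of_le_of_normalizer_eq_self {H K : Subgroup G} [Group.IsNilpotent K]
    (hHK : H ≤ K) (hH : normalizer (H : Set G) = H) : H = K := by
  have hHK' : normalizer ((H.subgroupOf K : Subgroup K) : Set K) = H.subgroupOf K := by
    rw [← subgroupOf_normalizer_eq hHK, hH]
  exact le_antisymm hHK <| subgroupOf_eq_top.mp <|
    normalizerCondition_iff_only_full_group_self_normalizing.mp
      Group.normalizerCondition_of_isNilpotent _ hHK'

theorem IsPGroup.isMulCommutative_of_card_dvd_prime_sq {p : ℕ} [Fact p.Prime]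
    (h : Nat.card G ∣ p ^ 2) : IsMulCommutative G := by
  obtain ⟨k, hk, hcard⟩ := (Nat.dvd_prime_pow Fact.out).1 h
  interval_cases k
  · have := (Nat.card_eq_one_iff_unique.mp hcard).1
    exact ⟨⟨fun _ _ ↦ Subsingleton.elim _ _⟩⟩
  · have := isCyclic_of_prime_card (hcard.trans (pow_one p))
    infer_instance
  · exact isMulCommutative_of_card_eq_prime_sq hcard

theorem IsPGroup.card_dvd_prime_sq [Finite G] {p : ℕ} [Fact p.Prime] {H : Subgroup G}
    (hH : IsPGroup p H) (hG : ¬ p ^ 3 ∣ Nat.card G) : Nat.card H ∣ p ^ 2 := by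
  obtain ⟨n, hn⟩ := IsPGroup.iff_card.mp hH
  rw [hn]
  refine pow_dvd_pow p (not_lt.mp fun h ↦ hG ?_)
  exact (pow_dvd_pow p h).trans (hn ▸ card_subgroup_dvd_card H)

theorem Sylow.eq_top_of_normalizer_le_centralizer [Finite G] [IsSimpleGroup G] {p : ℕ}
    [Fact p.Prime] (P : Sylow p G) (hp : p ∣ Nat.card G)
    (hP : normalizer (P : Set G) ≤ centralizer (P : Set G)) : (P : Subgroup G) = ⊤ := by
  have hK := MonoidHom.ker_transferSylow_isComplement' P hP
  rcases (MonoidHom.transferSylow P hP).normal_ker.eq_bot_or_eq_top with hbot | htop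
  · rwa [hbot, isComplement'_bot_left] at hK
  · have := MonoidHom.not_dvd_card_ker_transferSylow P hP
    rw [htop, card_top] at this
    exact (this hp).elim

end

namespace alternatingGroup

theorem nat_card_fin_five : Nat.card (alternatingGroup (Fin 5)) = 60 := by
  rw [nat_card_alternatingGroup, Nat.card_fin]
  rfl

theorem not_pow_three_dvd_card_fin_five {p : ℕ} (hp : p.Prime) :
    ¬ p ^ 3 ∣ Nat.card (alternatingGroup (Fin 5)) := by
  rw [nat_card_fin_five]
  intro h
  have : p < 4 := by
    by_contra! h4
    have := Nat.le_of_dvd (by norm_num) h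
    have := Nat.pow_le_pow_left h4 3
    omega
  interval_cases p <;> norm_num at *

theorem not_card_fin_five_dvd_prime_sq {p : ℕ} (hp : p.Prime) :
    ¬ Nat.card (alternatingGroup (Fin 5)) ∣ p ^ 2 := by
  rw [nat_card_fin_five]
  intro h
  obtain rfl : 2 = p := (Nat.prime_dvd_prime_iff_eq Nat.prime_two hp).mp
    (Nat.prime_two.dvd_of_dvd_pow ((by norm_num : 2 ∣ 60).trans h))
  norm_num at h

set_option maxRecDepth 10000 in
theorem orderOf_eq_one_or_prime_fin_five (g : alternatingGroup (Fin 5)) :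
    orderOf g = 1 ∨ (orderOf g).Prime := by
  have key : ∀ g : alternatingGroup (Fin 5), g ^ 2 = 1 ∨ g ^ 3 = 1 ∨ g ^ 5 = 1 := by decide
  have of_dvd : ∀ q : ℕ, q.Prime → orderOf g ∣ q → orderOf g = 1 ∨ (orderOf g).Prime :=
    fun q hq hdvd ↦ ((Nat.dvd_prime hq).mp hdvd).imp_right fun h ↦ by rwa [h]
  rcases key g with h | h | h
  · exact of_dvd 2 Nat.prime_two (orderOf_dvd_of_pow_eq_one h)
  · exact of_dvd 3 Nat.prime_three (orderOf_dvd_of_pow_eq_one h)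
  · exact of_dvd 5 Nat.prime_five (orderOf_dvd_of_pow_eq_one h)

end alternatingGroup

/-- The alternating group `Alt 5` contains no Carter subgroup. -/
theorem alt_five_has_no_carter_subgroup :
    ¬ ∃ H : Subgroup (alternatingGroup (Fin 5)), IsCarterSubgroup H := by
  rintro ⟨H, hnil, hnorm⟩
  have hne : Nat.card H ≠ 1 := fun h ↦ by
    rw [card_eq_one.mp h, normalizer_eq_top_iff.mpr inferInstance] at hnorm
    exact top_ne_bot hnorm
  set p := (Nat.card H).minFac
  have := Fact.mk (Nat.minFac_prime hne)
  have hH : IsPGroup p H := hnil.isPGroup_minFac fun g ↦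
    orderOf_coe g ▸ alternatingGroup.orderOf_eq_one_or_prime_fin_five g
  obtain ⟨P, hHP⟩ := hH.exists_le_sylow
  have := P.isPGroup'.isNilpotent
  have hPH : H = P := eq_of_le_of_normalizer_eq_self hHP hnorm
  have hsq : Nat.card H ∣ p ^ 2 :=
    hH.card_dvd_prime_sq (alternatingGroup.not_pow_three_dvd_card_fin_five Fact.out)
  have := IsPGroup.isMulCommutative_of_card_dvd_prime_sq hsq
  have hNC : normalizer (H : Set (alternatingGroup (Fin 5))) ≤ centralizer H := by
    rw [hnorm]
    exact le_centralizer H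
  rw [hPH] at hNC
  have htop := P.eq_top_of_normalizer_le_centralizer
    ((Nat.minFac_dvd _).trans (card_subgroup_dvd_card H)) hNC
  rw [hPH, htop, card_top] at hsq
  exact alternatingGroup.not_card_fin_five_dvd_prime_sq Fact.out hsq
end

section
/- Let F be a finite field of odd characteristic p and of cardinality pᵗ, and if p = 3 assume that t is even. Then every element u of order p in the special linear group SL₂(F) is conjugate in SL₂(F) to uᵏ for some natural number k with uᵏ ≠ u. -/
open Matrix Polynomial
open scoped MatrixGroups

/-!
An element `u` of order `p` in `SL₂(F)` is unipotent: `N = u - 1` is nilpotent, hence `N ^ 2 = 0`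
and `u ^ k = 1 + k • N`. An element of `SL₂(F)` acting by `s⁻¹` on the line `ker N = im N` and by
`s` on a complement conjugates `N` to `s ^ 2 • N`, so `u` is conjugate to `u ^ k` as soon as `k` is
a nonzero square in `F`. For `p > 3` take `k = 4 = 2 ^ 2`; for `p = 3` take `k = 2 = -1`, a square
because `#F = 3 ^ t` with `t` even is a perfect square and hence is not `3` mod `4`.
-/

theorem Matrix.pow_card_eq_zero_of_isNilpotent {n R : Type*} [Fintype n] [DecidableEq n]
    [CommRing R] [IsDomain R] {M : Matrix n n R} (hM : IsNilpotent M) :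
    M ^ Fintype.card n = 0 := by
  have hcharpoly : M.charpoly = X ^ Fintype.card n :=
    sub_eq_zero.mp (isNilpotent_charpoly_sub_pow_of_isNilpotent hM).eq_zero
  simpa [hcharpoly] using M.aeval_self_charpoly

theorem one_add_pow_of_sq_eq_zero {R : Type*} [Semiring R] {N : R} (hN : N ^ 2 = 0) (m : ℕ) :
    (1 + N) ^ m = 1 + m • N := by
  induction m with
  | zero => simp
  | succ m ih =>
    rw [pow_succ, ih, add_mul, one_mul, mul_add, mul_one, smul_mul_assoc, ← sq, hN, smul_zero,
      add_zero, succ_nsmul]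
    abel

theorem FiniteField.isSquare_neg_one_of_isSquare_card {F : Type*} [Field F] [Fintype F]
    (h : IsSquare (Fintype.card F)) : IsSquare (-1 : F) := by
  obtain ⟨n, hn⟩ := h
  rw [FiniteField.isSquare_neg_one_iff, hn, Nat.mul_mod]
  have := Nat.mod_lt n four_pos
  interval_cases n % 4 <;> decide

theorem exists_natCast_eq_sq_ne_one {F : Type*} [Field F] {p : ℕ} [CharP F p]
    (hp2 : p ≠ 2) (h3 : p = 3 → IsSquare (-1 : F)) :
    ∃ (k : ℕ) (s : F), s ≠ 0 ∧ (k : F) = s ^ 2 ∧ (k : F) ≠ 1 := by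
  by_cases hp3 : p = 3
  · obtain ⟨s, hs⟩ := h3 hp3
    subst hp3
    have hthree : ((3 : ℕ) : F) = 0 := CharP.cast_eq_zero F 3
    push_cast at hthree
    refine ⟨2, s, ?_, ?_, ?_⟩
    · rintro rfl
      simp at hs
    · push_cast
      linear_combination hthree + hs
    · push_cast
      intro h
      exact one_ne_zero (by linear_combination h : (1 : F) = 0)
  · have htwo := CharP.cast_ne_zero_of_ne_of_prime F Nat.prime_two hp2
    have hthree := CharP.cast_ne_zero_of_ne_of_prime F Nat.prime_three hp3
    push_cast at htwo hthree
    refine ⟨4, 2, htwo, by norm_num, fun h ↦ hthree ?_⟩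
    push_cast at h
    linear_combination h

theorem Matrix.exists_SL2_mul_eq_sq_smul_mul_of_sq_eq_zero {F : Type*} [Field F]
    {N : Matrix (Fin 2) (Fin 2) F} (hN : N ^ 2 = 0) {s : F} (hs : s ≠ 0) :
    ∃ g : SL(2, F), N * g = s ^ 2 • (g * N) := by
  obtain ⟨a, b, c, d, rfl⟩ : ∃ a b c d, N = !![a, b; c, d] := ⟨_, _, _, _, N.eta_fin_two⟩
  have h00 : a * a + b * c = 0 := by simpa [sq, mul_fin_two] using congrFun₂ hN 0 0
  have h10 : c * a + d * c = 0 := by simpa [sq, mul_fin_two] using congrFun₂ hN 1 0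
  have h11 : c * b + d * d = 0 := by simpa [sq, mul_fin_two] using congrFun₂ hN 1 1
  by_cases hc : c = 0
  · subst hc
    obtain rfl : a = 0 := by simpa using h00
    obtain rfl : d = 0 := by simpa using h11
    refine ⟨⟨!![s⁻¹, 0; 0, s], by simp [hs]⟩, ?_⟩
    ext i j
    fin_cases i <;> fin_cases j <;> simp
    field_simp
  · obtain rfl : d = -a := by
      have : c * (a + d) = 0 := by linear_combination h10
      linear_combination (mul_eq_zero.mp this).resolve_left hc
    obtain rfl : b = -a ^ 2 / c := by field_simp; linear_combination h00
    refine ⟨⟨!![s, (s⁻¹ - s) * a / c; 0, s⁻¹], by simp [hs]⟩, ?_⟩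
    ext i j
    fin_cases i <;> fin_cases j <;> simp <;> field_simp <;> ring

namespace Matrix.SpecialLinearGroup

theorem coe_sub_one_sq_eq_zero_of_pow_char_eq_one {F : Type*} [Field F] {p : ℕ} [Fact p.Prime]
    [CharP F p] {u : SL(2, F)} (hu : u ^ p = 1) : ((u : Matrix (Fin 2) (Fin 2) F) - 1) ^ 2 = 0 := by
  have hnil : IsNilpotent ((u : Matrix (Fin 2) (Fin 2) F) - 1) :=
    ⟨p, by rw [sub_pow_char_of_commute p (Commute.one_right _), ← coe_pow, hu, coe_one, one_pow,
      sub_self]⟩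
  simpa using pow_card_eq_zero_of_isNilpotent hnil

variable {n : Type*} [Fintype n] [DecidableEq n]

theorem coe_pow_of_coe_sub_one_sq_eq_zero {R : Type*} [CommRing R]
    {u : SpecialLinearGroup n R} (hu : ((u : Matrix n n R) - 1) ^ 2 = 0) (k : ℕ) :
    ((u ^ k : SpecialLinearGroup n R) : Matrix n n R) = 1 + (k : R) • ((u : Matrix n n R) - 1) := by
  rw [coe_pow, Nat.cast_smul_eq_nsmul, ← one_add_pow_of_sq_eq_zero hu, add_sub_cancel]

variable {F : Type*} [Field F]

theorem pow_ne_self_of_coe_sub_one_sq_eq_zero {u : SpecialLinearGroup n F}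
    (hu : ((u : Matrix n n F) - 1) ^ 2 = 0) (hu1 : u ≠ 1) {k : ℕ} (hk : (k : F) ≠ 1) :
    u ^ k ≠ u := by
  intro h
  have hN : (u : Matrix n n F) - 1 ≠ 0 := fun h0 ↦ hu1 (Subtype.ext (sub_eq_zero.mp h0))
  have hcoe := congrArg Subtype.val h
  rw [coe_pow_of_coe_sub_one_sq_eq_zero hu, add_comm] at hcoe
  refine hk (smul_left_injective F hN ?_)
  simpa using eq_sub_of_add_eq hcoe

theorem exists_conj_eq_pow_of_coe_sub_one_sq_eq_zero {u : SL(2, F)}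
    (hu : ((u : Matrix (Fin 2) (Fin 2) F) - 1) ^ 2 = 0) {k : ℕ} {s : F} (hs : s ≠ 0)
    (hk : (k : F) = s ^ 2) : ∃ g : SL(2, F), g⁻¹ * u * g = u ^ k := by
  obtain ⟨g, hg⟩ := exists_SL2_mul_eq_sq_smul_mul_of_sq_eq_zero hu hs
  refine ⟨g, ?_⟩
  rw [mul_assoc, inv_mul_eq_iff_eq_mul]
  refine Subtype.ext ?_
  rw [coe_mul, coe_mul, coe_pow_of_coe_sub_one_sq_eq_zero hu, hk, mul_add, mul_one,
    mul_smul_comm, ← hg, sub_mul, one_mul, add_sub_cancel]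

end Matrix.SpecialLinearGroup

/-- Let `F` be a finite field of odd characteristic `p` with `p^t` elements, where `t` is even
if `p = 3`. Then every element of order `p` in `SL₂(F)` is conjugate to a power `u^k ≠ u`. -/
theorem sl2_order_p_conjugate_power (p t : ℕ) (hp : p.Prime) (hodd : Odd p)
    (F : Type*) [Field F] [Fintype F] (hchar : CharP F p)
    (hcard : Fintype.card F = p ^ t) (ht : p = 3 → Even t)
    (u : Matrix.SpecialLinearGroup (Fin 2) F) (hu : orderOf u = p) :
    ∃ (k : ℕ) (g : Matrix.SpecialLinearGroup (Fin 2) F),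
      u ^ k ≠ u ∧ g⁻¹ * u * g = u ^ k := by
  have := Fact.mk hp
  obtain ⟨k, s, hs, hks, hk1⟩ := exists_natCast_eq_sq_ne_one (F := F)
    (hodd.ne_two_of_dvd_nat dvd_rfl) fun h3 ↦
      FiniteField.isSquare_neg_one_of_isSquare_card (hcard ▸ (ht h3).isSquare_pow p)
  have hN :=
    SpecialLinearGroup.coe_sub_one_sq_eq_zero_of_pow_char_eq_one (hu ▸ pow_orderOf_eq_one u)
  have hu1 : u ≠ 1 := fun h ↦ hp.one_lt.ne' (by rw [← hu, h, orderOf_one])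
  obtain ⟨g, hg⟩ := SpecialLinearGroup.exists_conj_eq_pow_of_coe_sub_one_sq_eq_zero hN hs hks
  exact ⟨k, g, SpecialLinearGroup.pow_ne_self_of_coe_sub_one_sq_eq_zero hN hu1 hk1, hg⟩
end
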